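/- arXiv:1505.05493 — 3 statements merged into one kernel-verified Lean document; each statement's English description precedes it below -/
import Mathlib

section
/- Let μ be a probability measure on ℝ, β ∈ [0,1], m > 0, h > 0, α ∈ (0,1). Suppose that for all x ≥ m, μ([x + h/x^β, ∞)) ≤ α μ([x,∞)). Then for all x ≥ m, ∫_x^∞ y^β μ([y,∞)) dy ≤ (K/(1-α)) μ([x,∞)), where K = h(1 + h/m^(β+1))^β. -/
/-!
Put `x₀ = x` and `xₙ₊₁ = xₙ + h / xₙ ^ β`. The hypothesis gives `μ([xₙ, ∞)) ≤ αⁿ μ([x, ∞))`.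
On `[xₙ, xₙ₊₁)`, of length `h / xₙ ^ β`, the integrand is at most `xₙ₊₁ ^ β μ([xₙ, ∞))`, and
`xₙ₊₁ / xₙ = 1 + h / xₙ ^ (β + 1) ≤ 1 + h / m ^ (β + 1)`, so the integral over that piece is at most
`K αⁿ μ([x, ∞))`. The `xₙ` are unbounded (below a bound `B` they would grow by at least
`h / B ^ β` per step), so these pieces cover `[x, ∞)` and summing the geometric
series gives the bound.
-/

open MeasureTheory Set
open scoped ENNReal

theorem Ici_subset_iUnion_Ico_of_not_bddAbove {X : Type*} [LinearOrder X] {a : ℕ → X}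
    (ha : ¬BddAbove (range a)) : Ici (a 0) ⊆ ⋃ n, Ico (a n) (a (n + 1)) := by
  intro y hy
  obtain ⟨_, ⟨N, rfl⟩, hyN⟩ := not_bddAbove_iff.1 ha y
  exact iUnion₂_subset_iUnion _ _ (Ico_subset_biUnion_Ico N a ⟨hy, hyN⟩)

theorem lintegral_Ici_le_of_le_geometric {a : ℕ → ℝ} (ha : ¬BddAbove (range a)) (F : ℝ → ℝ≥0∞)
    {C r : ℝ≥0∞} (hpiece : ∀ n, ∫⁻ y in Ico (a n) (a (n + 1)), F y ≤ C * r ^ n) :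
    ∫⁻ y in Ici (a 0), F y ≤ C * (1 - r)⁻¹ :=
  calc ∫⁻ y in Ici (a 0), F y
      ≤ ∫⁻ y in ⋃ n, Ico (a n) (a (n + 1)), F y :=
        lintegral_mono_set (Ici_subset_iUnion_Ico_of_not_bddAbove ha)
    _ ≤ ∑' n, ∫⁻ y in Ico (a n) (a (n + 1)), F y := lintegral_iUnion_le _ _
    _ ≤ ∑' n, C * r ^ n := ENNReal.tsum_le_tsum hpiece
    _ = C * (1 - r)⁻¹ := by rw [ENNReal.tsum_mul_left, ENNReal.tsum_geometric]

theorem add_div_rpow_rpow_mul_div_rpow_le {a m h β : ℝ} (hm : 0 < m) (hma : m ≤ a) (hh : 0 ≤ h)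
    (hβ : 0 ≤ β) : (a + h / a ^ β) ^ β * (h / a ^ β) ≤ h * (1 + h / m ^ (β + 1)) ^ β := by
  have ha : 0 < a := hm.trans_le hma
  have hfactor : a + h / a ^ β = a * (1 + h / a ^ (β + 1)) := by
    rw [Real.rpow_add_one ha.ne']
    field_simp
  have hmono : h / a ^ (β + 1) ≤ h / m ^ (β + 1) := by gcongr
  calc (a + h / a ^ β) ^ β * (h / a ^ β)
      = h * (1 + h / a ^ (β + 1)) ^ β := by
        rw [hfactor, Real.mul_rpow ha.le (by positivity)]
        field_simp
    _ ≤ h * (1 + h / m ^ (β + 1)) ^ β := by gcongr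

theorem setLIntegral_Ico_add_div_rpow_le {g : ℝ → ℝ≥0∞} (hg : Antitone g) {a m h β : ℝ}
    (hm : 0 < m) (hma : m ≤ a) (hh : 0 ≤ h) (hβ : 0 ≤ β) :
    ∫⁻ y in Ico a (a + h / a ^ β), ENNReal.ofReal (y ^ β) * g y ≤
      ENNReal.ofReal (h * (1 + h / m ^ (β + 1)) ^ β) * g a := by
  have ha : 0 ≤ a := hm.le.trans hma
  set b := a + h / a ^ β
  calc ∫⁻ y in Ico a b, ENNReal.ofReal (y ^ β) * g y
      ≤ ∫⁻ _ in Ico a b, ENNReal.ofReal (b ^ β) * g a :=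
        setLIntegral_mono measurable_const fun y hy =>
          mul_le_mul' (ENNReal.ofReal_le_ofReal (Real.rpow_le_rpow (ha.trans hy.1) hy.2.le hβ))
            (hg hy.1)
    _ = ENNReal.ofReal (b ^ β * (h / a ^ β)) * g a := by
        rw [setLIntegral_const, Real.volume_Ico, add_sub_cancel_left,
          ENNReal.ofReal_mul (by positivity)]
        ring
    _ ≤ ENNReal.ofReal (h * (1 + h / m ^ (β + 1)) ^ β) * g a :=
        mul_le_mul' (ENNReal.ofReal_le_ofReal
          (add_div_rpow_rpow_mul_div_rpow_le hm hma hh hβ)) le_rfl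

noncomputable def stepSeq (h β x : ℝ) : ℕ → ℝ
  | 0 => x
  | n + 1 => stepSeq h β x n + h / stepSeq h β x n ^ β

section stepSeq

variable {h β x : ℝ}

theorem self_le_stepSeq (hx : 0 ≤ x) (hh : 0 ≤ h) (n : ℕ) : x ≤ stepSeq h β x n := by
  induction n with
  | zero => exact le_rfl
  | succ n ih =>
    have : 0 ≤ h / stepSeq h β x n ^ β := div_nonneg hh (Real.rpow_nonneg (hx.trans ih) β)
    rw [stepSeq]
    linarith

theorem not_bddAbove_range_stepSeq (hx : 0 < x) (hh : 0 < h) (hβ : 0 ≤ β) :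
    ¬BddAbove (range (stepSeq h β x)) := by
  rintro ⟨B, hB⟩
  have hle : ∀ n, stepSeq h β x n ≤ B := fun n => hB (mem_range_self n)
  have hpos : ∀ n, 0 < stepSeq h β x n := fun n => hx.trans_le (self_le_stepSeq hx.le hh.le n)
  set c := h / B ^ β
  have hc : 0 < c := div_pos hh (Real.rpow_pos_of_pos ((hpos 0).trans_le (hle 0)) β)
  have hgrowth : ∀ n : ℕ, x + n * c ≤ stepSeq h β x n := by
    intro n
    induction n with
    | zero => simp [stepSeq]
    | succ n ih =>
      have hinc : c ≤ h / stepSeq h β x n ^ β :=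
        div_le_div_of_nonneg_left hh.le (Real.rpow_pos_of_pos (hpos n) β)
          (Real.rpow_le_rpow (hpos n).le (hle n) hβ)
      rw [stepSeq]
      push_cast
      linarith
  obtain ⟨n, hn⟩ := exists_nat_gt ((B - x) / c)
  have := (div_lt_iff₀ hc).1 hn
  linarith [hgrowth n, hle n]

theorem measure_Ici_stepSeq_le (μ : Measure ℝ) {m : ℝ} {r : ℝ≥0∞} (hm : 0 ≤ m) (hmx : m ≤ x)
    (hh : 0 ≤ h) (htail : ∀ y ≥ m, μ (Ici (y + h / y ^ β)) ≤ r * μ (Ici y)) (n : ℕ) :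
    μ (Ici (stepSeq h β x n)) ≤ r ^ n * μ (Ici x) := by
  induction n with
  | zero => simp [stepSeq]
  | succ n ih =>
    calc μ (Ici (stepSeq h β x (n + 1)))
        ≤ r * μ (Ici (stepSeq h β x n)) :=
          htail _ (hmx.trans (self_le_stepSeq (hm.trans hmx) hh n))
      _ ≤ r * (r ^ n * μ (Ici x)) := by gcongr
      _ = r ^ (n + 1) * μ (Ici x) := by ring

theorem setLIntegral_Ico_stepSeq_le (μ : Measure ℝ) {m : ℝ} {r : ℝ≥0∞} (hm : 0 < m) (hmx : m ≤ x)
    (hh : 0 ≤ h) (hβ : 0 ≤ β) (htail : ∀ y ≥ m, μ (Ici (y + h / y ^ β)) ≤ r * μ (Ici y)) (n : ℕ) :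
    ∫⁻ y in Ico (stepSeq h β x n) (stepSeq h β x (n + 1)), ENNReal.ofReal (y ^ β) * μ (Ici y) ≤
      ENNReal.ofReal (h * (1 + h / m ^ (β + 1)) ^ β) * μ (Ici x) * r ^ n :=
  calc _ ≤ ENNReal.ofReal (h * (1 + h / m ^ (β + 1)) ^ β) * μ (Ici (stepSeq h β x n)) :=
        setLIntegral_Ico_add_div_rpow_le (fun _ _ hab => measure_mono (Ici_subset_Ici.2 hab))
          hm (hmx.trans (self_le_stepSeq (hm.le.trans hmx) hh n)) hh hβ
    _ ≤ ENNReal.ofReal (h * (1 + h / m ^ (β + 1)) ^ β) * (r ^ n * μ (Ici x)) := by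
        gcongr
        exact measure_Ici_stepSeq_le μ hm.le hmx hh htail n
    _ = ENNReal.ofReal (h * (1 + h / m ^ (β + 1)) ^ β) * μ (Ici x) * r ^ n := by ring

end stepSeq

theorem setIntegral_Ici_rpow_mul_measure_Ici (μ : Measure ℝ) [IsFiniteMeasure μ] {x : ℝ}
    (hx : 0 ≤ x) (β : ℝ) :
    ∫ y in Ici x, y ^ β * (μ (Ici y)).toReal =
      (∫⁻ y in Ici x, ENNReal.ofReal (y ^ β) * μ (Ici y)).toReal := by
  have hanti : Antitone fun y : ℝ => μ (Ici y) := fun a b hab =>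
    measure_mono (Ici_subset_Ici.2 hab)
  have hmeas : Measurable fun y : ℝ => y ^ β * (μ (Ici y)).toReal :=
    (measurable_id.pow_const β).mul hanti.measurable.ennreal_toReal
  have hnonneg : 0 ≤ᵐ[volume.restrict (Ici x)] fun y => y ^ β * (μ (Ici y)).toReal := by
    filter_upwards [ae_restrict_mem measurableSet_Ici] with y hy
    have : 0 ≤ y := hx.trans hy
    positivity
  rw [integral_eq_lintegral_of_nonneg_ae hnonneg hmeas.aestronglyMeasurable]
  congr 1
  refine setLIntegral_congr_fun measurableSet_Ici fun y hy => ?_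
  rw [ENNReal.ofReal_mul (Real.rpow_nonneg (hx.trans hy) β),
    ENNReal.ofReal_toReal (measure_ne_top μ _)]

theorem stmt1 (μ : Measure ℝ) [IsProbabilityMeasure μ] (β m h α : ℝ)
    (hβ : β ∈ Set.Icc (0:ℝ) 1) (hm : 0 < m) (hh : 0 < h) (hα : α ∈ Set.Ioo (0:ℝ) 1)
    (htail : ∀ x ≥ m, (μ (Ici (x + h / x ^ β))).toReal ≤ α * (μ (Ici x)).toReal) :
    ∀ x ≥ m, (∫ y in Ici x, y ^ β * (μ (Ici y)).toReal) ≤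
      (h * (1 + h / m ^ (β + 1)) ^ β / (1 - α)) * (μ (Ici x)).toReal := by
  intro x hx
  have hx0 : 0 < x := hm.trans_le hx
  have hα' : 0 < 1 - α := sub_pos.2 hα.2
  have htail' : ∀ y ≥ m, μ (Ici (y + h / y ^ β)) ≤ ENNReal.ofReal α * μ (Ici y) := fun y hy =>
    (ENNReal.toReal_le_toReal (measure_ne_top μ _) (by finiteness)).1 <| by
      rw [ENNReal.toReal_mul, ENNReal.toReal_ofReal hα.1.le]
      exact htail y hy
  have hbound := lintegral_Ici_le_of_le_geometric (not_bddAbove_range_stepSeq hx0 hh hβ.1) _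
    (setLIntegral_Ico_stepSeq_le μ hm hx hh.le hβ.1 htail')
  rw [← ENNReal.ofReal_one, ← ENNReal.ofReal_sub _ hα.1.le, ← ENNReal.ofReal_inv_of_pos hα']
    at hbound
  rw [setIntegral_Ici_rpow_mul_measure_Ici μ hx0.le]
  refine (ENNReal.toReal_mono (by finiteness) hbound).trans_eq ?_
  rw [ENNReal.toReal_mul, ENNReal.toReal_mul, ENNReal.toReal_ofReal (by positivity),
    ENNReal.toReal_ofReal (inv_nonneg.2 hα'.le)]
  ring
end

section
/- For β ∈ (0,1], let H_β(t) = max{t², |t|^((β+1)/β)} for t ∈ ℝ. Then the Legendre transform H_β*(t) = sup_s (ts − H_β(s)) is given by: H_β*(t) = t²/4 if |t| ≤ 2; H_β*(t) = |t| − 1 if 2 ≤ |t| ≤ (β+1)/β; and H_β*(t) = (1/β)(β|t|/(β+1))^(1+β) if |t| ≥ (β+1)/β. -/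
/-!
Since `H(s) = max (s², |s|^p)` with `p = (β + 1)/β ≥ 2` is even, it suffices to take `t ≥ 0` and
`s ≥ 0`, where `H(s) = s²` on `[0, 1]` and `H(s) = s^p` on `[1, ∞)`. For `t ≤ 2` the parabola `s²`
alone is responsible and the supremum is attained at `s = t/2 ≤ 1`. For `t ≥ p` the power `s^p`
alone is responsible: by Young's inequality with the conjugate exponents `p` and `β + 1` the
supremum is attained at `s = (t/p)^β ≥ 1`. In between, the supremum sits at the kink `s = 1`,
which Bernoulli's inequality `s^p ≥ 1 + p (s - 1)` certifies.
-/

noncomputable def legendre (H : ℝ → ℝ) (t : ℝ) : ℝ := ⨆ s, (t * s - H s)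

lemma legendre_eq_of_forall_le_of_eq {H : ℝ → ℝ} {t M : ℝ} (hle : ∀ s, t * s - H s ≤ M)
    {s₀ : ℝ} (heq : t * s₀ - H s₀ = M) : legendre H t = M :=
  (show IsGreatest (Set.range fun s => t * s - H s) M from
    ⟨⟨s₀, heq⟩, Set.forall_mem_range.2 hle⟩).isLUB.ciSup_eq

lemma legendre_abs {H : ℝ → ℝ} (hH : Function.Even H) (t : ℝ) : legendre H |t| = legendre H t := by
  rcases abs_choice t with ht | ht
  · rw [ht]
  · rw [ht, legendre, ← (Equiv.neg ℝ).iSup_comp]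
    simp only [Equiv.neg_apply, neg_mul_neg, legendre, hH _]

lemma legendre_eq_of_even {H : ℝ → ℝ} (hH : Function.Even H) {t M : ℝ} (ht : 0 ≤ t)
    (hle : ∀ s, 0 ≤ s → t * s - H s ≤ M) {s₀ : ℝ} (heq : t * s₀ - H s₀ = M) :
    legendre H t = M := by
  refine legendre_eq_of_forall_le_of_eq (fun s => ?_) heq
  have hH_abs : H |s| = H s := by
    rcases abs_choice s with hs | hs
    · rw [hs]
    · rw [hs, hH s]
  calc t * s - H s ≤ t * |s| - H |s| := by
        rw [hH_abs]; gcongr; exact le_abs_self s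
    _ ≤ M := hle |s| (abs_nonneg s)

noncomputable def maxSqRpow (p s : ℝ) : ℝ := max (s ^ 2) (|s| ^ p)

lemma maxSqRpow_even (p : ℝ) : Function.Even (maxSqRpow p) := fun s => by
  simp only [maxSqRpow, neg_sq, abs_neg]

lemma maxSqRpow_of_le_one {p s : ℝ} (hp : 2 ≤ p) (hs₀ : 0 ≤ s) (hs₁ : s ≤ 1) :
    maxSqRpow p s = s ^ 2 := by
  rw [maxSqRpow, abs_of_nonneg hs₀, max_eq_left]
  rw [← Real.rpow_two]
  exact Real.rpow_le_rpow_of_exponent_ge' hs₀ hs₁ zero_le_two hp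

lemma maxSqRpow_of_one_le {p s : ℝ} (hp : 2 ≤ p) (hs : 1 ≤ s) : maxSqRpow p s = s ^ p := by
  rw [maxSqRpow, abs_of_nonneg (zero_le_one.trans hs), max_eq_right]
  rw [← Real.rpow_two]
  exact Real.rpow_le_rpow_of_exponent_le hs hp

lemma rpow_le_maxSqRpow (p : ℝ) {s : ℝ} (hs : 0 ≤ s) : s ^ p ≤ maxSqRpow p s := by
  rw [maxSqRpow, abs_of_nonneg hs]
  exact le_max_right _ _

lemma mul_sub_rpow_le {β x s : ℝ} (hβ : 0 < β) (hx : 0 ≤ x) (hs : 0 ≤ s) :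
    (β + 1) / β * x * s - s ^ ((β + 1) / β) ≤ 1 / β * x ^ (1 + β) := by
  have hconj : ((β + 1) / β).HolderConjugate (β + 1) :=
    Real.holderConjugate_iff.2 ⟨by rw [lt_div_iff₀ hβ]; linarith, by field_simp⟩
  have hyoung := Real.young_inequality_of_nonneg hs hx hconj
  rw [add_comm 1 β]
  calc (β + 1) / β * x * s - s ^ ((β + 1) / β)
      = (β + 1) / β * (s * x - s ^ ((β + 1) / β) / ((β + 1) / β)) := by field_simp
    _ ≤ (β + 1) / β * (x ^ (β + 1) / (β + 1)) := by gcongr; linarith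
    _ = 1 / β * x ^ (β + 1) := by field_simp

lemma mul_sub_rpow_eq {β x : ℝ} (hβ : 0 < β) (hx : 0 ≤ x) :
    (β + 1) / β * x * x ^ β - (x ^ β) ^ ((β + 1) / β) = 1 / β * x ^ (1 + β) := by
  rw [← Real.rpow_mul hx, mul_div_cancel₀ _ hβ.ne', add_comm β 1,
    Real.rpow_add' hx (by linarith), Real.rpow_one]
  field_simp
  ring

lemma legendre_maxSqRpow_of_le_two {p t : ℝ} (hp : 2 ≤ p) (ht₀ : 0 ≤ t) (ht : t ≤ 2) :
    legendre (maxSqRpow p) t = t ^ 2 / 4 := by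
  refine legendre_eq_of_forall_le_of_eq (s₀ := t / 2) (fun s => ?_) ?_
  · have : s ^ 2 ≤ maxSqRpow p s := le_max_left _ _
    nlinarith [sq_nonneg (s - t / 2)]
  · rw [maxSqRpow_of_le_one hp (by positivity) (by linarith)]
    ring

lemma legendre_maxSqRpow_of_two_le_of_le {p t : ℝ} (hp : 2 ≤ p) (ht₂ : 2 ≤ t) (htp : t ≤ p) :
    legendre (maxSqRpow p) t = t - 1 := by
  refine legendre_eq_of_even (maxSqRpow_even p) (by linarith) (s₀ := 1) (fun s hs => ?_) ?_
  · rcases le_total s 1 with hs₁ | hs₁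
    · rw [maxSqRpow_of_le_one hp hs hs₁]
      nlinarith
    · have hbernoulli : 1 + p * (s - 1) ≤ s ^ p := by
        simpa using one_add_mul_self_le_rpow_one_add (s := s - 1) (by linarith) (by linarith)
      rw [maxSqRpow_of_one_le hp hs₁]
      nlinarith
  · rw [maxSqRpow_of_one_le hp le_rfl, Real.one_rpow]
    ring

lemma legendre_maxSqRpow_of_le {β t : ℝ} (hβ : 0 < β) (hp : 2 ≤ (β + 1) / β)
    (ht : (β + 1) / β ≤ t) :
    legendre (maxSqRpow ((β + 1) / β)) t = 1 / β * (β * t / (β + 1)) ^ (1 + β) := by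
  set x := β * t / (β + 1)
  have hx₁ : 1 ≤ x := by
    rw [le_div_iff₀ (by linarith), one_mul]; rwa [div_le_iff₀' hβ] at ht
  have hx₀ : 0 ≤ x := zero_le_one.trans hx₁
  have htx : t = (β + 1) / β * x := by simp only [x]; field_simp
  refine legendre_eq_of_even (maxSqRpow_even _) (by linarith) (s₀ := x ^ β) (fun s hs => ?_) ?_
  · calc t * s - maxSqRpow ((β + 1) / β) s ≤ t * s - s ^ ((β + 1) / β) := by
          gcongr; exact rpow_le_maxSqRpow _ hs
      _ ≤ 1 / β * x ^ (1 + β) := by rw [htx]; exact mul_sub_rpow_le hβ hx₀ hs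
  · rw [maxSqRpow_of_one_le hp (Real.one_le_rpow hx₁ hβ.le), htx]
    exact mul_sub_rpow_eq hβ hx₀

theorem stmt5 (β : ℝ) (hβ : β ∈ Set.Ioc (0:ℝ) 1) (t : ℝ) :
    (|t| ≤ 2 →
      (⨆ s : ℝ, (t * s - max (s ^ 2) (|s| ^ ((β + 1) / β)))) = t ^ 2 / 4) ∧
    (2 ≤ |t| → |t| ≤ (β + 1) / β →
      (⨆ s : ℝ, (t * s - max (s ^ 2) (|s| ^ ((β + 1) / β)))) = |t| - 1) ∧
    ((β + 1) / β ≤ |t| →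
      (⨆ s : ℝ, (t * s - max (s ^ 2) (|s| ^ ((β + 1) / β)))) =
        (1 / β) * (β * |t| / (β + 1)) ^ (1 + β)) := by
  obtain ⟨hβ₀, hβ₁⟩ := hβ
  have hp : 2 ≤ (β + 1) / β := by rw [le_div_iff₀ hβ₀]; linarith
  have hsup : (⨆ s : ℝ, (t * s - max (s ^ 2) (|s| ^ ((β + 1) / β)))) =
      legendre (maxSqRpow ((β + 1) / β)) |t| :=
    (legendre_abs (maxSqRpow_even _) t).symm
  rw [hsup, ← sq_abs t]
  exact ⟨legendre_maxSqRpow_of_le_two hp (abs_nonneg t), legendre_maxSqRpow_of_two_le_of_le hp,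
    legendre_maxSqRpow_of_le hβ₀ hp⟩
end

section
/- For every β ∈ [0,1] and every t ∈ ℝ, the Legendre transform H_β* of H_β(s) = max{s², |s|^((β+1)/β)} (with H_0(s) = s² for |s| ≤ 1 and +∞ otherwise) satisfies H_β*(t) ≥ (3/16) min{t², |t|^(1+β)}. -/
/-!
Every choice of `s` gives the lower bound `H_β*(t) ≥ t s - H_β(s)`. For `|t| ≤ 2` take `s = t / 2`,
which lies in `[-1, 1]` where `H_β(s) = s²`, giving `t² / 4`. For `|t| > 2` take `s` of the sign of
`t` with `|s| = (|t| / 2) ^ β ≥ 1`, where `H_β(s) = |s| ^ ((β + 1) / β)` (or `1` when `β = 0`); this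
gives `(|t| / 2) ^ (1 + β) ≥ |t| ^ (1 + β) / 4` (resp. `|t| - 1 ≥ |t| / 2`).
-/

noncomputable def Hfun (β s : ℝ) : EReal :=
  if β = 0 then (if |s| ≤ 1 then ((s ^ 2 : ℝ) : EReal) else ⊤)
  else ((max (s ^ 2) (|s| ^ ((β + 1) / β)) : ℝ) : EReal)

open Set Real

noncomputable def legendreTransform (f : ℝ → EReal) (t : ℝ) : EReal :=
  ⨆ s : ℝ, ((t * s : ℝ) : EReal) - f s

lemma coe_le_legendreTransform {f : ℝ → EReal} {t s h c : ℝ} (hs : f s = h)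
    (hc : c ≤ t * s - h) :
    (c : EReal) ≤ legendreTransform f t := by
  refine le_trans ?_ (le_iSup _ s)
  rw [hs, ← EReal.coe_sub]
  exact EReal.coe_le_coe_iff.2 hc

lemma two_le_add_one_div_self {β : ℝ} (hβ0 : 0 < β) (hβ1 : β ≤ 1) : 2 ≤ (β + 1) / β := by
  rw [le_div_iff₀ hβ0]; linarith

lemma Hfun_of_abs_le_one {β s : ℝ} (hβ : β ∈ Icc 0 1) (hs : |s| ≤ 1) :
    Hfun β s = ((s ^ 2 : ℝ) : EReal) := by
  rcases hβ.1.eq_or_lt with rfl | hβ0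
  · simp [Hfun, hs]
  · have : |s| ^ ((β + 1) / β) ≤ s ^ 2 := by
      rw [← sq_abs, ← rpow_two]
      exact rpow_le_rpow_of_exponent_ge' (abs_nonneg s) hs two_pos.le
        (two_le_add_one_div_self hβ0 hβ.2)
    simp [Hfun, hβ0.ne', this]

lemma Hfun_of_one_le_abs {β s : ℝ} (hβ0 : 0 < β) (hβ1 : β ≤ 1) (hs : 1 ≤ |s|) :
    Hfun β s = ((|s| ^ ((β + 1) / β) : ℝ) : EReal) := by
  have : s ^ 2 ≤ |s| ^ ((β + 1) / β) := by
    rw [← sq_abs, ← rpow_two]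
    exact rpow_le_rpow_of_exponent_le hs (two_le_add_one_div_self hβ0 hβ1)
  simp [Hfun, hβ0.ne', this]

lemma abs_div_abs_self {t : ℝ} (ht : t ≠ 0) : |(t / |t|)| = 1 := by
  rw [abs_div, abs_abs, div_self (abs_ne_zero.2 ht)]

lemma mul_div_abs_self (t : ℝ) : t * (t / |t|) = |t| := by
  rw [← mul_div_assoc, ← abs_mul_abs_self, mul_self_div_self]

lemma sq_div_four_le_legendreTransform_Hfun {β t : ℝ} (hβ : β ∈ Icc 0 1)
    (ht : |t| ≤ 2) :
    ((t ^ 2 / 4 : ℝ) : EReal) ≤ legendreTransform (Hfun β) t := by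
  have hs : |t / 2| ≤ 1 := by rw [abs_div, abs_two]; linarith
  exact coe_le_legendreTransform (Hfun_of_abs_le_one hβ hs) (by ring_nf; rfl)

lemma abs_sub_one_le_legendreTransform_Hfun_zero {t : ℝ} (ht : t ≠ 0) :
    ((|t| - 1 : ℝ) : EReal) ≤ legendreTransform (Hfun 0) t := by
  have hs := abs_div_abs_self ht
  refine coe_le_legendreTransform (Hfun_of_abs_le_one ⟨le_rfl, zero_le_one⟩ hs.le) ?_
  rw [mul_div_abs_self, ← sq_abs, hs, one_pow]

lemma half_abs_rpow_le_legendreTransform_Hfun {β t : ℝ} (hβ0 : 0 < β) (hβ1 : β ≤ 1)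
    (ht : 2 ≤ |t|) :
    (((|t| / 2) ^ (1 + β) : ℝ) : EReal) ≤ legendreTransform (Hfun β) t := by
  set a := |t| / 2 with ha_def
  have ha : 1 ≤ a := by rw [ha_def]; linarith
  have hs : |(t / |t| * a ^ β)| = a ^ β := by
    rw [abs_mul, abs_div_abs_self (abs_pos.1 (by linarith)), one_mul, abs_of_nonneg (by positivity)]
  have hH : |(t / |t| * a ^ β)| ^ ((β + 1) / β) = a ^ (1 + β) := by
    rw [hs, ← rpow_mul (by positivity), mul_div_cancel₀ _ hβ0.ne', add_comm]
  refine coe_le_legendreTransform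
    (Hfun_of_one_le_abs hβ0 hβ1 (hs ▸ one_le_rpow ha hβ0.le)) ?_
  rw [hH, ← mul_assoc, mul_div_abs_self, rpow_add (by positivity), rpow_one, ha_def]
  linarith

lemma rpow_one_add_le_four_mul_half_rpow {x β : ℝ} (hx : 0 ≤ x) (hβ : β ≤ 1) :
    x ^ (1 + β) ≤ 4 * (x / 2) ^ (1 + β) := by
  have h4 : (2 : ℝ) ^ (1 + β) ≤ 4 := by
    calc (2 : ℝ) ^ (1 + β) ≤ 2 ^ (2 : ℝ) := rpow_le_rpow_of_exponent_le one_le_two (by linarith)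
      _ = 4 := by norm_num
  calc x ^ (1 + β) = 2 ^ (1 + β) * (x / 2) ^ (1 + β) := by
        rw [← mul_rpow zero_le_two (by positivity), mul_div_cancel₀ _ two_ne_zero]
    _ ≤ 4 * (x / 2) ^ (1 + β) := by gcongr

theorem stmt6 (β : ℝ) (hβ : β ∈ Set.Icc (0:ℝ) 1) (t : ℝ) :
    ((3 / 16 * min (t ^ 2) (|t| ^ (1 + β)) : ℝ) : EReal) ≤
      ⨆ s : ℝ, (((t * s : ℝ) : EReal) - Hfun β s) := by
  change _ ≤ legendreTransform (Hfun β) t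
  rcases le_or_gt |t| 2 with ht | ht
  · refine le_trans (EReal.coe_le_coe_iff.2 ?_) (sq_div_four_le_legendreTransform_Hfun hβ ht)
    linarith [min_le_left (t ^ 2) (|t| ^ (1 + β)), sq_nonneg t]
  have hmin_rpow := min_le_right (t ^ 2) (|t| ^ (1 + β))
  rcases hβ.1.eq_or_lt with rfl | hβ0
  · refine le_trans (EReal.coe_le_coe_iff.2 ?_)
      (abs_sub_one_le_legendreTransform_Hfun_zero (abs_pos.1 (by linarith)))
    simp only [add_zero, rpow_one] at hmin_rpow ⊢
    linarith
  · refine le_trans (EReal.coe_le_coe_iff.2 ?_)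
      (half_abs_rpow_le_legendreTransform_Hfun hβ0 hβ.2 ht.le)
    have : 0 ≤ (|t| / 2) ^ (1 + β) := by positivity
    linarith [rpow_one_add_le_four_mul_half_rpow (abs_nonneg t) hβ.2]
end
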